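/- For every finite K ⊆ ℕ and every K-symmetric relation ρ ⊆ ℕ × ℕ, there exist a finite set K' ⊆ ℕ and a K'-symmetric relation σ ⊆ ℕ × ℕ such that for every ξ ∈ ℕ: if there exists η ∈ ℕ with (ξ, η) ∈ ρ, then there exists exactly one η ∈ ℕ with (ξ, η) ∈ ρ and (ξ, η) ∈ σ. (This is the combinatorial core of the fact that the Zermelo-Asser axiom AC^{1,1} holds in the basic Fraenkel model Σ₀.) -/
import Mathlib


/-- `α ⊆ ℕ` is `K`-symmetric: `π '' α = α` for every permutation `π` of `ℕ` fixing `K`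
pointwise. -/
def SymmSet0 (K : Set ℕ) (α : Set ℕ) : Prop :=
  ∀ π : Equiv.Perm ℕ, (∀ k ∈ K, π k = k) → π '' α = α

/-- `ρ ⊆ ℕ × ℕ` is `K`-symmetric: for every permutation `π` of `ℕ` fixing `K` pointwise,
`(π ξ, π η) ∈ ρ ↔ (ξ, η) ∈ ρ`. -/
def SymmRel0 (K : Set ℕ) (ρ : Set (ℕ × ℕ)) : Prop :=
  ∀ π : Equiv.Perm ℕ, (∀ k ∈ K, π k = k) →
    ∀ ξ η : ℕ, ((π ξ, π η) ∈ ρ ↔ (ξ, η) ∈ ρ)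

/-- Combinatorial core of `Σ₀ ⊨ AC^{1,1}`: every symmetric relation `ρ` on `ℕ` admits a
symmetric choice relation `σ`. -/
theorem stmt_15 (K : Set ℕ) (hK : K.Finite) (ρ : Set (ℕ × ℕ)) (hρ : SymmRel0 K ρ) :
    ∃ (K' : Set ℕ) (σ : Set (ℕ × ℕ)), K'.Finite ∧ SymmRel0 K' σ ∧
      ∀ ξ : ℕ, (∃ η : ℕ, (ξ, η) ∈ ρ) → ∃! η : ℕ, (ξ, η) ∈ ρ ∧ (ξ, η) ∈ σ := by
  classical
  obtain ⟨a, ha⟩ := hK.infinite_compl.nonempty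
  obtain ⟨b, hb⟩ := (hK.union (Set.finite_singleton a)).infinite_compl.nonempty
  simp only [Set.mem_compl_iff, Set.mem_union, Set.mem_singleton_iff, not_or] at ha hb
  obtain ⟨hbK, hba⟩ := hb
  set c : ℕ → ℕ := fun ξ =>
    if (ξ, ξ) ∈ ρ then ξ
    else if {k | k ∈ K ∧ (ξ, k) ∈ ρ}.Nonempty then sInf {k | k ∈ K ∧ (ξ, k) ∈ ρ}
    else if ξ = a then b else a with hc
  -- the chosen element is in the fiber when the fiber is nonempty
  have hmem : ∀ ξ : ℕ, (∃ η : ℕ, (ξ, η) ∈ ρ) → (ξ, c ξ) ∈ ρ := by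
    intro ξ ⟨η0, hη0⟩
    by_cases h1 : (ξ, ξ) ∈ ρ
    · simpa [hc, h1] using h1
    by_cases h2 : {k | k ∈ K ∧ (ξ, k) ∈ ρ}.Nonempty
    · have := Nat.sInf_mem h2
      simp only [hc, h1, if_false, h2, if_true]
      exact this.2
    · -- fiber meets neither K nor {ξ}; it is invariant under swaps outside K ∪ {ξ}
      have hη0K : η0 ∉ K := fun h => h2 ⟨η0, h, hη0⟩
      have hη0ξ : η0 ≠ ξ := fun h => h1 (h ▸ hη0)
      have key : ∀ t : ℕ, t ∉ K → t ≠ ξ → (ξ, t) ∈ ρ := by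
        intro t htK htξ
        have hswap := hρ (Equiv.swap η0 t) (fun k hk =>
          Equiv.swap_apply_of_ne_of_ne (fun h => hη0K (h ▸ hk)) (fun h => htK (h ▸ hk))) ξ η0
        rw [Equiv.swap_apply_of_ne_of_ne (Ne.symm hη0ξ) (Ne.symm htξ),
          Equiv.swap_apply_left] at hswap
        exact hswap.mpr hη0
      by_cases h3 : ξ = a
      · subst h3
        have := key b hbK hba
        simpa [hc, h1, h2] using this
      · have := key a ha (fun h => h3 h.symm)
        simpa [hc, h1, h2, h3] using this
  -- σ is (K ∪ {a, b})-symmetric: c commutes with admissible permutations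
  refine ⟨K ∪ {a, b}, {p | p.2 = c p.1}, hK.union (by simp), ?_, ?_⟩
  · intro π hπ ξ η
    have hπK : ∀ k ∈ K, π k = k := fun k hk => hπ k (Or.inl hk)
    have hπa : π a = a := hπ a (Or.inr (by simp))
    have hπb : π b = b := hπ b (Or.inr (by simp))
    have hcomm : c (π ξ) = π (c ξ) := by
      by_cases h1 : (ξ, ξ) ∈ ρ
      · have h1' : (π ξ, π ξ) ∈ ρ := (hρ π hπK ξ ξ).mpr h1
        simp [hc, h1, h1']
      · have h1' : (π ξ, π ξ) ∉ ρ := fun h => h1 ((hρ π hπK ξ ξ).mp h)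
        have hsetK : {k | k ∈ K ∧ (π ξ, k) ∈ ρ} = {k | k ∈ K ∧ (ξ, k) ∈ ρ} := by
          ext k
          simp only [Set.mem_setOf_eq, and_congr_right_iff]
          intro hk
          conv_lhs => rw [show k = π k from (hπK k hk).symm]
          exact hρ π hπK ξ k
        by_cases h2 : {k | k ∈ K ∧ (ξ, k) ∈ ρ}.Nonempty
        · have h2' : {k | k ∈ K ∧ (π ξ, k) ∈ ρ}.Nonempty := hsetK ▸ h2
          have hmemK := Nat.sInf_mem h2
          simp only [hc, h1, if_false, h2, if_true, h1', h2', hsetK]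
          exact (hπK _ hmemK.1).symm
        · have h2' : ¬ {k | k ∈ K ∧ (π ξ, k) ∈ ρ}.Nonempty := hsetK ▸ h2
          have hξa : π ξ = a ↔ ξ = a := by
            constructor
            · intro h; exact π.injective (h.trans hπa.symm)
            · intro h; rw [h, hπa]
          by_cases h3 : ξ = a
          · subst h3
            rw [hπa]
            simp [hc, h1, h2, hπb]
          · simp [hc, h1, h2, h1', h2', hξa, h3, hπa]
    simp only [Set.mem_setOf_eq, hcomm]
    exact ⟨fun h => π.injective h, fun h => h ▸ rfl⟩
  · intro ξ hξ
    exact ⟨c ξ, ⟨hmem ξ hξ, rfl⟩, fun y hy => hy.2⟩
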